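/- Let p be a prime and let K be a field with a nontrivial nonarchimedean multiplicative norm ‖·‖ : K → ℝ≥0. Let K° = {x ∈ K : ‖x‖ ≤ 1} and 𝔪 = {x ∈ K : ‖x‖ < 1}. Assume K is spherically complete (every chain of closed balls in K has nonempty intersection) and that there is a sequence (π_n)_{n≥0} in K° with 0 < ‖π_0‖ < 1, π_{n+1}^p = π_n for all n, and 𝔪 = ⋃_n π_n K°. Then Ext¹_{K°}(𝔪, 𝔪) = 0, i.e. the first Ext group of the K°-module 𝔪 with itself vanishes (equivalently, every short exact sequence of K°-modules 0 → 𝔪 → E → 𝔪 → 0 splits). -/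

import Mathlib

/-- The maximal ideal `𝔪 = {x ∈ K : ‖x‖ < 1}` of the valuation ring
`K° = {x ∈ K : ‖x‖ ≤ 1}`, regarded as a `K°`-submodule of `K`. -/
def maxIdealSubmodule {K : Type*} [Field K] (v : Valuation K NNReal) :
    Submodule v.integer K where
  carrier := {x : K | v x < 1}
  add_mem' := fun {a b} ha hb => lt_of_le_of_lt (v.map_add a b) (max_lt ha hb)
  zero_mem' := by simp
  smul_mem' := fun c x hx => by
    have hc : v (c : K) ≤ 1 := c.2
    have : v ((c : K) * x) < 1 := by
      calc v ((c : K) * x) = v (c : K) * v x := v.map_mul _ _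
        _ ≤ 1 * v x := mul_le_mul_of_nonneg_right hc zero_le
        _ = v x := one_mul _
        _ < 1 := hx
    simpa [Subring.smul_def] using this

/-- `K` is spherically complete: every family of closed balls that is totally ordered by
inclusion has nonempty intersection. -/
def SphericallyComplete {K : Type*} [Field K] (v : Valuation K NNReal) : Prop :=
  ∀ 𝒞 : Set (Set K), (∀ B ∈ 𝒞, ∃ (c : K) (r : NNReal), B = {x : K | v (x - c) ≤ r}) →
    IsChain (· ⊆ ·) 𝒞 → (⋂₀ 𝒞).Nonempty

/-!
Write `π n = t n * π (n + 1)` with `t n = π (n + 1) ^ (p - 1) ∈ 𝔪`. Lifts `e n ∈ E` of the `π n`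
fail to be compatible by defects `m n = t n • e (n + 1) - e n ∈ 𝔪`, and correcting them by `x n ∈ 𝔪`
makes them compatible as soon as `x n = m n + t n * x (n + 1)`. With `T n = ∏_{j<n} t j` and
`C n = ∑_{j<n} T j * m j`, this recursion is solved by `x n = (y - C n) / T n` for any `y` in all the
nested closed balls `‖y - C n‖ ≤ ‖T n‖`, and such a `y` exists by spherical completeness. Since
`𝔪` is the increasing union of the `π n K°`, a compatible system `f n` over the `π n` defines a
splitting `π n * a ↦ a • f n`.
-/

section CompatibleFamily

variable {R M N : Type*}

theorem smul_eq_smul_of_smul_succ_eq [Ring R] [IsCancelMulZero R] [AddCommGroup M] [Module R M]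
    [Module.IsTorsionFree R M] [AddCommGroup N] [Module R N] {π : ℕ → M} {f : ℕ → N}
    {t : ℕ → R} (hπ : ∀ n, π n ≠ 0) (htπ : ∀ n, t n • π (n + 1) = π n)
    (htf : ∀ n, t n • f (n + 1) = f n) {n k : ℕ} {a b : R} (h : a • π n = b • π k) :
    a • f n = b • f k := by
  wlog hnk : n ≤ k generalizing n k a b
  · exact (this h.symm (le_of_not_ge hnk)).symm
  obtain ⟨d, rfl⟩ := Nat.exists_eq_add_of_le hnk
  clear hnk
  induction d generalizing n a with
  | zero => rw [(smul_left_inj (hπ n)).1 h, Nat.add_zero]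
  | succ d ih =>
    rw [← htπ n, smul_smul] at h
    rw [← htf n, smul_smul]
    rw [show n + (d + 1) = n + 1 + d by omega] at h ⊢
    exact ih h

theorem exists_smul_eq_of_le [Semiring R] [AddCommMonoid M] [Module R M] {π : ℕ → M}
    {t : ℕ → R} (htπ : ∀ n, t n • π (n + 1) = π n) {n k : ℕ} (hnk : n ≤ k) :
    ∃ c : R, c • π k = π n := by
  induction k, hnk using Nat.le_induction with
  | base => exact ⟨1, one_smul R _⟩
  | succ k _ ih =>
    obtain ⟨c, hc⟩ := ih
    exact ⟨c * t k, by rw [mul_smul, htπ, hc]⟩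

theorem exists_linearMap_apply_eq_smul [Semiring R] [AddCommMonoid M] [Module R M]
    [AddCommMonoid N] [Module R N] {π : ℕ → M} {f : ℕ → N} {t : ℕ → R}
    (htπ : ∀ n, t n • π (n + 1) = π n)
    (hf : ∀ n k (a b : R), a • π n = b • π k → a • f n = b • f k)
    (I : Submodule R M) (hI : ∀ x ∈ I, ∃ n, ∃ a : R, x = a • π n) :
    ∃ s : I →ₗ[R] N, ∀ (z : I) n (a : R), (z : M) = a • π n → s z = a • f n := by
  choose ν α hα using fun z : I => hI z z.2
  have hs : ∀ (z : I) n (a : R), (z : M) = a • π n → α z • f (ν z) = a • f n :=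
    fun z n a hz => hf _ _ _ _ ((hα z).symm.trans hz)
  refine ⟨⟨⟨fun z => α z • f (ν z), fun z w => ?_⟩, fun c z => ?_⟩, hs⟩
  · obtain ⟨c, hc⟩ := exists_smul_eq_of_le htπ (le_max_left (ν z) (ν w))
    obtain ⟨d, hd⟩ := exists_smul_eq_of_le htπ (le_max_right (ν z) (ν w))
    have hzw : ((z + w : I) : M) = (α z * c + α w * d) • π (max (ν z) (ν w)) := by
      rw [add_smul, mul_smul, mul_smul, hc, hd, ← hα, ← hα, Submodule.coe_add]
    rw [hs _ _ _ hzw, add_smul, ← hf (ν z) _ (α z) (α z * c) (by rw [mul_smul, hc]),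
      ← hf (ν w) _ (α w) (α w * d) (by rw [mul_smul, hd])]
  · have hcz : ((c • z : I) : M) = (c * α z) • π (ν z) := by
      rw [mul_smul, ← hα, Submodule.coe_smul]
    exact (hs _ _ _ hcz).trans (mul_smul _ _ _)

end CompatibleFamily

theorem Function.Exact.exists_lift_smul_succ_eq {R A E Q : Type*} [Ring R] [AddCommGroup A]
    [Module R A] [AddCommGroup E] [Module R E] [AddCommGroup Q] [Module R Q]
    {i : A →ₗ[R] E} {q : E →ₗ[R] Q} (hiq : Function.Exact i q) (hq : Function.Surjective q)
    {t : ℕ → R} (hA : ∀ m : ℕ → A, ∃ x : ℕ → A, ∀ n, x n = m n + t n • x (n + 1))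
    {y : ℕ → Q} (hy : ∀ n, t n • y (n + 1) = y n) :
    ∃ f : ℕ → E, (∀ n, q (f n) = y n) ∧ ∀ n, t n • f (n + 1) = f n := by
  choose e he using fun n => hq (y n)
  choose m hm using fun n => (hiq (t n • e (n + 1) - e n)).1 (by simp [he, hy])
  obtain ⟨x, hx⟩ := hA m
  refine ⟨fun n => e n + i (x n), fun n => by simp [he, hiq.apply_apply_eq_zero], fun n => ?_⟩
  dsimp only
  rw [smul_add, ← map_smul, hx n, map_add, hm n]
  abel

namespace SphericallyComplete

variable {K : Type*} [Field K] {v : Valuation K NNReal}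

theorem exists_forall_sub_le (hsc : SphericallyComplete v) {c : ℕ → K} {r : ℕ → NNReal}
    (hr : Antitone r) (hc : ∀ n, v (c (n + 1) - c n) ≤ r n) : ∃ y, ∀ n, v (y - c n) ≤ r n := by
  set B : ℕ → Set K := fun n => {x | v (x - c n) ≤ r n}
  have hB : Antitone B := antitone_nat_of_succ_le fun n x (hx : v (x - c (n + 1)) ≤ r (n + 1)) =>
    calc v (x - c n) = v ((x - c (n + 1)) + (c (n + 1) - c n)) := by ring_nf
      _ ≤ max (v (x - c (n + 1))) (v (c (n + 1) - c n)) := v.map_add _ _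
      _ ≤ r n := max_le (hx.trans (hr n.le_succ)) (hc n)
  obtain ⟨y, hy⟩ := hsc (Set.range B) (by rintro _ ⟨n, rfl⟩; exact ⟨c n, r n, rfl⟩)
    hB.isChain_range
  exact ⟨y, fun n => hy _ ⟨n, rfl⟩⟩

theorem exists_eq_add_mul_succ (hsc : SphericallyComplete v) {t m : ℕ → K}
    (ht₀ : ∀ n, t n ≠ 0) (ht : ∀ n, v (t n) < 1) (hm : ∀ n, v (m n) < 1) :
    ∃ x : ℕ → K, (∀ n, v (x n) < 1) ∧ ∀ n, x n = m n + t n * x (n + 1) := by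
  set T : ℕ → K := fun n => ∏ j ∈ Finset.range n, t j
  set C : ℕ → K := fun n => ∑ j ∈ Finset.range n, T j * m j
  have hT₀ : ∀ n, 0 < v (T n) := fun n =>
    v.pos_iff.2 (Finset.prod_ne_zero_iff.2 fun j _ => ht₀ j)
  have hT : ∀ n, T (n + 1) = T n * t n := fun n => Finset.prod_range_succ _ _
  have hC : ∀ n, C (n + 1) = C n + T n * m n := fun n => Finset.sum_range_succ _ _
  obtain ⟨y, hy⟩ := hsc.exists_forall_sub_le (c := C) (r := fun n => v (T n))
    (antitone_nat_of_succ_le fun n => by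
      simpa only [hT, map_mul] using mul_le_of_le_one_right zero_le (ht n).le)
    (fun n => by
      rw [hC, add_sub_cancel_left, map_mul]
      exact mul_le_of_le_one_right zero_le (hm n).le)
  have hyC : ∀ n, v (y - C n) < v (T n) := fun n =>
    calc v (y - C n) = v ((y - C (n + 1)) + T n * m n) := by rw [hC]; ring_nf
      _ ≤ max (v (y - C (n + 1))) (v (T n * m n)) := v.map_add _ _
      _ < v (T n) := by
        rw [map_mul]
        refine max_lt ((hy (n + 1)).trans_lt ?_) (mul_lt_of_lt_one_right (hT₀ n) (hm n))
        simpa only [hT, map_mul] using mul_lt_of_lt_one_right (hT₀ n) (ht n)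
  refine ⟨fun n => (y - C n) / T n, fun n => ?_, fun n => ?_⟩
  · rw [map_div₀, div_lt_one (hT₀ n)]
    exact hyC n
  · simp only [hT, hC]
    field_simp [ht₀ n, v.pos_iff.1 (hT₀ n)]
    ring

theorem exists_eq_add_smul_succ (hsc : SphericallyComplete v) {t : ℕ → v.integer}
    (ht₀ : ∀ n, t n ≠ 0) (ht : ∀ n, v (t n) < 1) (m : ℕ → maxIdealSubmodule v) :
    ∃ x : ℕ → maxIdealSubmodule v, ∀ n, x n = m n + t n • x (n + 1) := by
  obtain ⟨x, hx, hxm⟩ := hsc.exists_eq_add_mul_succ (fun n => Subtype.coe_ne_coe.2 (ht₀ n)) ht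
    (fun n => (m n).2)
  exact ⟨fun n => ⟨x n, hx n⟩, fun n => Subtype.ext (hxm n)⟩

end SphericallyComplete

theorem ne_zero_and_lt_one_of_pow_succ_eq {K : Type*} [Field K] {v : Valuation K NNReal} {p : ℕ}
    (hp : p ≠ 0) {π : ℕ → K} (hπ : ∀ n, π (n + 1) ^ p = π n) (h₀ : π 0 ≠ 0) (h₁ : v (π 0) < 1) :
    ∀ n, π n ≠ 0 ∧ v (π n) < 1
  | 0 => ⟨h₀, h₁⟩
  | n + 1 => by
    obtain ⟨hn₀, hn₁⟩ := ne_zero_and_lt_one_of_pow_succ_eq hp hπ h₀ h₁ n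
    refine ⟨fun h => hn₀ ?_, (pow_lt_one_iff_of_nonneg zero_le hp).1 ?_⟩
    · rw [← hπ, h, zero_pow hp]
    · rwa [← map_pow, hπ]

theorem ext_maxIdeal_maxIdeal_eq_zero_general (p : ℕ) (hp : p.Prime) (K : Type*) [Field K]
    (v : Valuation K NNReal)
    (hsc : SphericallyComplete v)
    (π : ℕ → K)
    (hπ0 : 0 < v (π 0)) (hπ1 : v (π 0) < 1)
    (hπp : ∀ n, (π (n + 1)) ^ p = π n)
    (hπm : ∀ x : K, v x < 1 ↔ ∃ n, ∃ a : K, v a ≤ 1 ∧ x = π n * a) :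
    ∀ (E : Type*) [AddCommGroup E] [Module v.integer E]
      (i : maxIdealSubmodule v →ₗ[v.integer] E)
      (π' : E →ₗ[v.integer] maxIdealSubmodule v),
      Function.Injective i → Function.Surjective π' →
      LinearMap.range i = LinearMap.ker π' →
      ∃ s : maxIdealSubmodule v →ₗ[v.integer] E, π' ∘ₗ s = LinearMap.id := by
  intro E _ _ i q _ hq hiq
  have hπ := ne_zero_and_lt_one_of_pow_succ_eq hp.ne_zero hπp (v.pos_iff.1 hπ0) hπ1
  have ht : ∀ n, π (n + 1) ^ (p - 1) ≠ 0 ∧ v (π (n + 1) ^ (p - 1)) < 1 := fun n =>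
    ⟨pow_ne_zero _ (hπ _).1, by
      rw [map_pow]; exact pow_lt_one₀ zero_le (hπ _).2 (Nat.sub_ne_zero_of_lt hp.one_lt)⟩
  let t : ℕ → v.integer := fun n => ⟨π (n + 1) ^ (p - 1), (ht n).2.le⟩
  have htπ : ∀ n, t n • π (n + 1) = π n := fun n => by
    rw [Subring.smul_def, smul_eq_mul, ← pow_succ, Nat.sub_add_cancel hp.one_le, hπp]
  obtain ⟨f, hfq, hf⟩ := (LinearMap.exact_iff.2 hiq.symm).exists_lift_smul_succ_eq hq
    (hsc.exists_eq_add_smul_succ (fun n h => (ht n).1 (congrArg Subtype.val h)) (fun n => (ht n).2))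
    (y := fun n => ⟨π n, (hπ n).2⟩) (fun n => Subtype.ext (htπ n))
  have hI : ∀ x ∈ maxIdealSubmodule v, ∃ n, ∃ a : v.integer, x = a • π n := fun x hx => by
    obtain ⟨n, a, ha, rfl⟩ := (hπm x).1 hx
    exact ⟨n, ⟨a, ha⟩, mul_comm _ _⟩
  obtain ⟨s, hs⟩ := exists_linearMap_apply_eq_smul htπ
    (fun _ _ _ _ => smul_eq_smul_of_smul_succ_eq (fun n => (hπ n).1) htπ hf) _ hI
  refine ⟨s, LinearMap.ext fun z => ?_⟩
  obtain ⟨n, a, hz⟩ := hI z z.2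
  rw [LinearMap.comp_apply, hs z n a hz, map_smul, hfq]
  exact Subtype.ext hz.symm

/-- Let `p` be a prime and `K` a spherically complete field with a nontrivial
nonarchimedean multiplicative norm, with a compatible `p`-power root system of
pseudo-uniformizers generating `𝔪`.  Then `Ext¹_{K°}(𝔪, 𝔪) = 0`: every short exact
sequence of `K°`-modules `0 → 𝔪 → E → 𝔪 → 0` splits. -/
theorem ext_maxIdeal_maxIdeal_eq_zero (p : ℕ) (hp : p.Prime) (K : Type*) [Field K]
    (v : Valuation K NNReal) (hnt : ∃ x : K, x ≠ 0 ∧ v x ≠ 1)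
    (hsc : SphericallyComplete v)
    (π : ℕ → K) (hπint : ∀ n, v (π n) ≤ 1)
    (hπ0 : 0 < v (π 0)) (hπ1 : v (π 0) < 1)
    (hπp : ∀ n, (π (n + 1)) ^ p = π n)
    (hπm : ∀ x : K, v x < 1 ↔ ∃ n, ∃ a : K, v a ≤ 1 ∧ x = π n * a) :
    ∀ (E : Type*) [AddCommGroup E] [Module v.integer E]
      (i : maxIdealSubmodule v →ₗ[v.integer] E)
      (π' : E →ₗ[v.integer] maxIdealSubmodule v),
      Function.Injective i → Function.Surjective π' →
      LinearMap.range i = LinearMap.ker π' →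
      ∃ s : maxIdealSubmodule v →ₗ[v.integer] E, π' ∘ₗ s = LinearMap.id :=
  ext_maxIdeal_maxIdeal_eq_zero_general p hp K v hsc π hπ0 hπ1 hπp hπm
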